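/- The function g(x) = ∑_{n=1}^∞ (n - x)/(n + x)^3 is positive for all x > -1. -/

import Mathlib

/-!
The summand at `k = n + 1` is `-φ'(k)` for `φ(a) = a / (a + x) ^ 2`, so the series is bounded
below by telescoping differences of `φ`. Where `φ` is convex (`k ≥ 2x`) the tangent line gives
`φ(k) - φ(k + 1) ≤ -φ'(k)`; for `1/2 ≤ k ≤ 2x` the midpoint bound
`φ(k - 1/2) - φ(k + 1/2) ≤ -φ'(k)` holds instead. Splitting the series at `m = ⌈2x - 1⌉₊`, its
sum is at least `φ(1/2) - φ(m + 1/2) + φ(m + 1)`, which is positive.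
-/

open Filter Finset Topology

section Telescoping

variable {α : Type*} [AddCommGroup α] [PartialOrder α] [IsOrderedAddMonoid α]

theorem sub_le_sum_range_of_sub_succ_le {f u : ℕ → α} {N : ℕ}
    (h : ∀ n < N, u n - u (n + 1) ≤ f n) : u 0 - u N ≤ ∑ n ∈ range N, f n := by
  rw [← sum_range_sub']
  exact sum_le_sum fun n hn => h n (mem_range.1 hn)

theorem le_tsum_of_sub_succ_le [TopologicalSpace α] [IsTopologicalAddGroup α]
    [OrderClosedTopology α] {f u : ℕ → α} (hf : Summable f) (hu : Tendsto u atTop (𝓝 0))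
    (h : ∀ n, u n - u (n + 1) ≤ f n) : u 0 ≤ ∑' n, f n := by
  simpa using le_of_tendsto_of_tendsto' (tendsto_const_nhds.sub hu) hf.hasSum.tendsto_sum_nat
    fun N => sub_le_sum_range_of_sub_succ_le fun n _ => h n

end Telescoping

noncomputable def elbertTerm (x k : ℝ) : ℝ := (k - x) / (k + x) ^ 3

noncomputable def elbertPotential (x a : ℝ) : ℝ := a / (a + x) ^ 2

theorem elbertPotential_sub_le_elbertTerm_of_le_two_mul {x k : ℝ} (hk : 1 / 2 ≤ k)
    (hkx : k ≤ 2 * x) :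
    elbertPotential x (k - 1 / 2) - elbertPotential x (k + 1 / 2) ≤ elbertTerm x k := by
  have h1 : 0 < k + x := by linarith
  have h2 : 0 < k - 1 / 2 + x := by linarith
  have h3 : 0 < k + 1 / 2 + x := by linarith
  -- `16 ×` the numerator of the difference of the two sides
  have key : 0 ≤ 4 * k * (2 * x - k) * (k + x) + 12 * k * x ^ 2 + 12 * x ^ 3 + k - x := by
    nlinarith [mul_nonneg (mul_nonneg (by linarith : (0 : ℝ) ≤ k) (sub_nonneg.2 hkx)) h1.le]
  unfold elbertPotential elbertTerm
  rw [div_sub_div _ _ (by positivity) (by positivity),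
    div_le_div_iff₀ (by positivity) (by positivity)]
  nlinarith [key, mul_pos (mul_pos (pow_pos h1 3) (pow_pos h2 2)) (pow_pos h3 2)]

theorem elbertPotential_sub_le_elbertTerm_of_two_mul_le {x k : ℝ} (hk : 0 < k + x)
    (hkx : 2 * x ≤ k) :
    elbertPotential x k - elbertPotential x (k + 1) ≤ elbertTerm x k := by
  have h1 : 0 < k + 1 + x := by linarith
  -- the numerator of the difference of the two sides
  have key : 0 ≤ (k - 2 * x) * (k + x) + (k - x) := by
    nlinarith [mul_nonneg (sub_nonneg.2 hkx) hk.le]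
  unfold elbertPotential elbertTerm
  rw [div_sub_div _ _ (by positivity) (by positivity),
    div_le_div_iff₀ (by positivity) (by positivity)]
  nlinarith [key, mul_pos (pow_pos hk 3) (pow_pos h1 2)]

theorem tendsto_elbertPotential_atTop (x : ℝ) :
    Tendsto (elbertPotential x) atTop (𝓝 0) := by
  have hinv : Tendsto (fun a : ℝ => (a + x)⁻¹) atTop (𝓝 0) :=
    tendsto_inv_atTop_zero.comp (tendsto_atTop_add_const_right _ x tendsto_id)
  have hlim := hinv.sub ((hinv.pow 2).const_mul x)
  rw [zero_pow two_ne_zero, mul_zero, sub_zero] at hlim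
  refine hlim.congr' ?_
  filter_upwards [eventually_gt_atTop (-x)] with a ha
  have : a + x ≠ 0 := by linarith
  unfold elbertPotential
  field_simp
  ring

theorem summable_elbertTerm (x : ℝ) : Summable fun n : ℕ => elbertTerm x (n + 1) := by
  have hp (s : ℕ) (hs : 1 < s) : Summable fun n : ℕ => 1 / ((n : ℝ) + 1 + x) ^ s := by
    refine Summable.of_norm ?_
    have := (Real.summable_one_div_nat_add_rpow (1 + x) s).2 (by exact_mod_cast hs)
    simpa [Real.rpow_natCast, add_assoc] using this
  refine ((hp 2 one_lt_two).sub ((hp 3 (by norm_num)).mul_left (2 * x))).congr fun n => ?_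
  unfold elbertTerm
  rcases eq_or_ne ((n : ℝ) + 1 + x) 0 with h | h
  · simp [h]
  · field_simp
    ring

theorem elbertPotential_half_sub_add_pos {x M : ℝ} (hx : 0 ≤ x) (hM : 0 ≤ M) :
    0 < elbertPotential x (1 / 2) - elbertPotential x (M + 1 / 2) + elbertPotential x (M + 1) := by
  unfold elbertPotential
  have d1 : 0 < 1 / 2 + x := by linarith
  have d2 : 0 < M + 1 / 2 + x := by linarith
  have d3 : 0 < M + 1 + x := by linarith
  rw [div_sub_div _ _ (by positivity) (by positivity),
    div_add_div _ _ (by positivity) (by positivity)]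
  apply div_pos _ (by positivity)
  -- the numerator is a polynomial in `x` and `M` with positive coefficients
  ring_nf
  positivity

theorem elbertPotential_sub_le_sum_range {x : ℝ} {m : ℕ} (hm : ∀ n < m, (n : ℝ) < 2 * x - 1) :
    elbertPotential x (1 / 2) - elbertPotential x (m + 1 / 2) ≤
      ∑ n ∈ range m, elbertTerm x (n + 1) := by
  refine (sub_le_sum_range_of_sub_succ_le (u := fun n : ℕ => elbertPotential x (n + 1 / 2))
    fun n hn => ?_).trans_eq' (by simp)
  have hn' : (n : ℝ) + 1 ≤ 2 * x := by linarith [hm n hn]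
  calc _ = elbertPotential x ((n + 1) - 1 / 2) - elbertPotential x ((n + 1) + 1 / 2) := by
        push_cast; ring_nf
    _ ≤ _ := elbertPotential_sub_le_elbertTerm_of_le_two_mul (by linarith) hn'

theorem elbertPotential_le_tsum_nat_add {x : ℝ} (hx : -1 < x) {m : ℕ} (hm : 2 * x ≤ m + 1) :
    elbertPotential x (m + 1) ≤ ∑' n : ℕ, elbertTerm x ((n + m : ℕ) + 1) := by
  refine (le_tsum_of_sub_succ_le ((summable_nat_add_iff m).2 (summable_elbertTerm x))
    (u := fun n : ℕ => elbertPotential x ((n + m : ℕ) + 1)) ?_ fun n => ?_).trans_eq' (by simp)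
  · exact (tendsto_elbertPotential_atTop x).comp <| tendsto_atTop_add_const_right _ 1 <|
      tendsto_natCast_atTop_atTop.comp (tendsto_add_atTop_nat m)
  · have hk : (m : ℝ) + 1 ≤ ((n + m : ℕ) : ℝ) + 1 := by simp
    calc _ = elbertPotential x ((n + m : ℕ) + 1) - elbertPotential x ((n + m : ℕ) + 1 + 1) := by
          push_cast; ring_nf
      _ ≤ _ := elbertPotential_sub_le_elbertTerm_of_two_mul_le (by linarith) (by linarith)

theorem elbert_laforgia_series_pos (x : ℝ) (hx : -1 < x) :
    0 < ∑' n : ℕ, (((n : ℝ) + 1) - x) / (((n : ℝ) + 1) + x) ^ 3 := by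
  set m := ⌈2 * x - 1⌉₊
  have hhead := elbertPotential_sub_le_sum_range (x := x) (m := m) fun n hn => Nat.lt_ceil.1 hn
  have htail := elbertPotential_le_tsum_nat_add hx (m := m) (by linarith [Nat.le_ceil (2 * x - 1)])
  have hpos : 0 < elbertPotential x (1 / 2) - elbertPotential x (m + 1 / 2) +
      elbertPotential x (m + 1) := by
    rcases eq_or_ne m 0 with hm | hm
    · simp only [elbertPotential, hm, CharP.cast_eq_zero, zero_add, sub_self, one_div, inv_pos]
      exact pow_pos (by linarith) 2
    · have hx' : 0 < 2 * x - 1 := by simpa using Nat.lt_ceil.1 (Nat.pos_of_ne_zero hm)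
      exact elbertPotential_half_sub_add_pos (by linarith) m.cast_nonneg
  change 0 < ∑' n : ℕ, elbertTerm x (n + 1)
  rw [← (summable_elbertTerm x).sum_add_tsum_nat_add m]
  linarith
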